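/- For n ≥ 5, if a quotient q: B'_n → G satisfies q(α_{ijk}) = q(β_{ijk}) for some triple i < j < k, then G is trivial. -/

import Mathlib

/-- Relators of the Artin presentation of the braid group on `n` strands.
Generator `i : Fin (n-1)` corresponds to the Artin generator `σ_{i+1}`. -/
def braidRels (n : ℕ) : Set (FreeGroup (Fin (n - 1))) :=
  {r | (∃ i j : Fin (n - 1), (i : ℕ) + 1 = (j : ℕ) ∧
          r = .of i * .of j * .of i * (.of j * .of i * .of j)⁻¹) ∨
       (∃ i j : Fin (n - 1), (i : ℕ) + 2 ≤ (j : ℕ) ∧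
          r = .of i * .of j * (.of j * .of i)⁻¹)}

/-- The braid group on `n` strands. -/
def BraidGroup (n : ℕ) : Type := PresentedGroup (braidRels n)

instance (n : ℕ) : Group (BraidGroup n) := by unfold BraidGroup; infer_instance

/-- `sig n i` is the Artin generator `σ_i` (1-based: `1 ≤ i ≤ n-1`), and `1` otherwise. -/
def sig (n : ℕ) (i : ℕ) : BraidGroup n :=
  if h : 1 ≤ i ∧ i ≤ n - 1 then PresentedGroup.of ⟨i - 1, by omega⟩ else 1

/-- The exponent sum homomorphism `B_n → ℤ`, sending each Artin generator to `1`. -/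
def expSum (n : ℕ) : BraidGroup n →* Multiplicative ℤ :=
  PresentedGroup.toGroup (f := fun _ : Fin (n - 1) => Multiplicative.ofAdd (1 : ℤ))
    (by
      rintro r (⟨i, j, -, rfl⟩ | ⟨i, j, -, rfl⟩) <;>
        simp only [map_mul, map_inv, FreeGroup.lift_apply_of] <;> group)

/-- The Birman–Ko–Lee generator `ρ_{ij}`:
the half twist `(σ_{j-1} ⋯ σ_{i+1}) σ_i (σ_{j-1} ⋯ σ_{i+1})⁻¹`. -/
def rho (n i j : ℕ) : BraidGroup n :=
  (((List.range' (i + 1) (j - 1 - i)).reverse.map (sig n)).prod) * sig n i *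
    (((List.range' (i + 1) (j - 1 - i)).reverse.map (sig n)).prod)⁻¹

/-!
Write `c = a b⁻¹ = ⁅ρ_jk, ρ_ij⁻¹⁆`; it lies in the image `M` of `ker q`, which `B'_n` normalizes.
The element `c` is conjugate to `⁅σ_j, σ_{j-1}⁻¹⁆`, and for `n ≥ 5` some conjugate `t` of `σ_1`
commutes with it. As `B_n = B'_n ⟨t⟩`, every `B_n`-conjugate of `c` is a `B'_n`-conjugate, so the
normal closure of `c` in `B_n` lies in `M`. Modulo this normal closure `σ_{j-1}` and `σ_j` commute,
so the braid relation identifies them, and then successively all generators: the quotient is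
cyclic, hence `B'_n ≤ M`, i.e. `q` is trivial.
-/

open scoped commutatorElement

section Braiding

variable {G : Type*} [Group G] {a b : G}

theorem conj_eq_of_braid (h : a * b * a = b * a * b) : (a * b) * a * (a * b)⁻¹ = b := by
  calc (a * b) * a * (a * b)⁻¹ = (b * a * b) * b⁻¹ * a⁻¹ := by rw [← h]; group
    _ = b := by group

theorem mul_mul_inv_eq_of_braid (h : a * b * a = b * a * b) : b * a * b⁻¹ = a⁻¹ * b * a := by
  calc b * a * b⁻¹ = a⁻¹ * (a * b * a) * b⁻¹ := by group
    _ = a⁻¹ * b * a := by rw [h]; group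

theorem eq_of_braid_of_commute (h : a * b * a = b * a * b) (hc : Commute a b) : a = b := by
  rw [hc.eq] at h
  simpa using h

end Braiding

theorem Subgroup.normalClosure_le_of_commute {G : Type*} [Group G] {H M : Subgroup G} {c t : G}
    (hHM : H ≤ Subgroup.normalizer (M : Set G)) (hc : c ∈ M) (htc : Commute t c)
    (hG : ∀ g : G, ∃ m : ℤ, g * t ^ m ∈ H) : Subgroup.normalClosure {c} ≤ M := by
  refine Subgroup.closure_le _ |>.mpr fun x hx => ?_
  obtain ⟨d, hd, hdx⟩ := Group.mem_conjugatesOfSet_iff.mp hx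
  rw [Set.mem_singleton_iff] at hd
  obtain ⟨g, rfl⟩ := isConj_iff.mp (hd ▸ hdx)
  obtain ⟨m, hm⟩ := hG g
  have hconj : (g * t ^ m) * c * (g * t ^ m)⁻¹ = g * c * g⁻¹ :=
    calc _ = g * (t ^ m * c * (t ^ m)⁻¹) * g⁻¹ := by group
      _ = g * c * g⁻¹ := by rw [(htc.zpow_left m).mul_inv_cancel]
  rw [← hconj]
  exact (Subgroup.mem_normalizer_iff.mp (hHM hm) c).mp hc

namespace BraidGroup

variable {n : ℕ}

theorem sig_eq_of {p : ℕ} (h1 : 1 ≤ p) (h2 : p ≤ n - 1) :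
    sig n p = PresentedGroup.of (rels := braidRels n) ⟨p - 1, by omega⟩ :=
  dif_pos ⟨h1, h2⟩

theorem sig_eq_one {p : ℕ} (h : ¬(1 ≤ p ∧ p ≤ n - 1)) : sig n p = 1 :=
  dif_neg h

theorem of_eq_sig (x : Fin (n - 1)) :
    PresentedGroup.of (rels := braidRels n) x = sig n (x + 1) := by
  rw [sig_eq_of (by omega) (by omega)]
  rfl

theorem sig_braid {p : ℕ} (h1 : 1 ≤ p) (h2 : p + 1 ≤ n - 1) :
    sig n p * sig n (p + 1) * sig n p = sig n (p + 1) * sig n p * sig n (p + 1) := by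
  have h := PresentedGroup.one_of_mem (rels := braidRels n)
    (Or.inl ⟨⟨p - 1, by omega⟩, ⟨p, by omega⟩, by simp; omega, rfl⟩)
  simp only [map_mul, map_inv, mul_inv_eq_one] at h
  rwa [sig_eq_of h1 (by omega), sig_eq_of (by omega) h2]

theorem sig_commute {p r : ℕ} (h : p + 2 ≤ r) : Commute (sig n p) (sig n r) := by
  by_cases hp : 1 ≤ p ∧ p ≤ n - 1
  · by_cases hr : 1 ≤ r ∧ r ≤ n - 1
    · have h := PresentedGroup.one_of_mem (rels := braidRels n)
        (Or.inr ⟨⟨p - 1, by omega⟩, ⟨r - 1, by omega⟩, by simp; omega, rfl⟩)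
      simp only [map_mul, map_inv, mul_inv_eq_one] at h
      rwa [Commute, SemiconjBy, sig_eq_of hp.1 hp.2, sig_eq_of hr.1 hr.2]
    · rw [sig_eq_one hr]; exact Commute.one_right _
  · rw [sig_eq_one hp]; exact Commute.one_left _

theorem sig_conj {p : ℕ} (h1 : 1 ≤ p) (h2 : p + 1 ≤ n - 1) :
    (sig n p * sig n (p + 1)) * sig n p * (sig n p * sig n (p + 1))⁻¹ = sig n (p + 1) :=
  conj_eq_of_braid (sig_braid h1 h2)

theorem isConj_sig_one {p : ℕ} (h1 : 1 ≤ p) (h2 : p ≤ n - 1) : IsConj (sig n 1) (sig n p) := by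
  induction p, h1 using Nat.le_induction with
  | base => exact IsConj.refl _
  | succ p hp ih =>
    exact (ih (by omega)).trans (isConj_iff.mpr ⟨_, sig_conj hp h2⟩)

theorem hom_ext {Q : Type*} [Group Q] {f g : BraidGroup n →* Q}
    (h : ∀ p, 1 ≤ p → p ≤ n - 1 → f (sig n p) = g (sig n p)) : f = g :=
  PresentedGroup.ext fun y => by
    have hy := h (y + 1) (by omega) (by omega)
    rw [← of_eq_sig] at hy
    exact hy

theorem expSum_sig {p : ℕ} (h1 : 1 ≤ p) (h2 : p ≤ n - 1) :
    expSum n (sig n p) = Multiplicative.ofAdd 1 := by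
  rw [sig_eq_of h1 h2]
  exact PresentedGroup.toGroup.of _

theorem eq_zpowersHom_comp_expSum {Q : Type*} [Group Q] (f : BraidGroup n →* Q) (x : Q)
    (hf : ∀ p, 1 ≤ p → p ≤ n - 1 → f (sig n p) = x) :
    f = (zpowersHom Q x).comp (expSum n) :=
  hom_ext fun p h1 h2 => by
    rw [MonoidHom.comp_apply, expSum_sig h1 h2, zpowersHom_apply, toAdd_ofAdd, zpow_one, hf p h1 h2]

theorem commutator_le_ker_of_map_sig_eq {Q : Type*} [Group Q] (f : BraidGroup n →* Q) (x : Q)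
    (hf : ∀ p, 1 ≤ p → p ≤ n - 1 → f (sig n p) = x) : commutator (BraidGroup n) ≤ f.ker := by
  rw [eq_zpowersHom_comp_expSum f x hf, ← MonoidHom.comap_ker]
  exact (Abelianization.commutator_subset_ker _).trans (MonoidHom.ker_le_comap _ _)

theorem exists_mul_zpow_mem_commutator {t : BraidGroup n} (ht : IsConj (sig n 1) t)
    (g : BraidGroup n) : ∃ m : ℤ, g * t ^ m ∈ commutator (BraidGroup n) := by
  have hof : ∀ p, 1 ≤ p → p ≤ n - 1 → Abelianization.of (sig n p) = Abelianization.of t :=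
    fun p h1 h2 => isConj_iff_eq.mp
      (Abelianization.of.map_isConj ((isConj_sig_one h1 h2).symm.trans ht))
  have hg := DFunLike.congr_fun (eq_zpowersHom_comp_expSum _ _ hof) g
  refine ⟨-Multiplicative.toAdd (expSum n g), ?_⟩
  rw [← Abelianization.ker_of, MonoidHom.mem_ker, map_mul, map_zpow, hg, MonoidHom.comp_apply,
    zpowersHom_apply, ← zpow_add, add_neg_cancel, zpow_zero]

section Quotient

variable {Q : Type*} [Group Q] (f : BraidGroup n →* Q)

theorem map_sig_eq_succ_iff {p : ℕ} (h1 : 1 ≤ p) (h2 : p + 2 ≤ n - 1) :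
    f (sig n p) = f (sig n (p + 1)) ↔ f (sig n (p + 1)) = f (sig n (p + 2)) := by
  have hb (r : ℕ) (h1 : 1 ≤ r) (h2 : r + 1 ≤ n - 1) :
      f (sig n r) * f (sig n (r + 1)) * f (sig n r)
        = f (sig n (r + 1)) * f (sig n r) * f (sig n (r + 1)) := by
    simpa only [map_mul] using congrArg f (sig_braid h1 h2)
  have hc : Commute (f (sig n p)) (f (sig n (p + 2))) := (sig_commute le_rfl).map f
  constructor
  · intro h
    exact eq_of_braid_of_commute (hb (p + 1) (by omega) h2) (h ▸ hc)
  · intro h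
    exact eq_of_braid_of_commute (hb p h1 (by omega)) (h ▸ hc)

theorem map_sig_eq_map_sig_one {j : ℕ} (h1 : 1 ≤ j) (h2 : j + 1 ≤ n - 1)
    (h : f (sig n j) = f (sig n (j + 1))) {p : ℕ} (hp1 : 1 ≤ p) (hp2 : p ≤ n - 1) :
    f (sig n p) = f (sig n 1) := by
  have hiff : ∀ r, 1 ≤ r → r + 1 ≤ n - 1 → (f (sig n r) = f (sig n (r + 1)) ↔
      f (sig n 1) = f (sig n 2)) := by
    intro r hr
    induction r, hr using Nat.le_induction with
    | base => exact fun _ => Iff.rfl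
    | succ r hr ih => exact fun hrn => (map_sig_eq_succ_iff f hr hrn).symm.trans (ih (by omega))
  have h12 := (hiff j h1 h2).mp h
  induction p, hp1 using Nat.le_induction with
  | base => rfl
  | succ p hp ih => rw [← (hiff p hp hp2).mpr h12, ih (by omega)]

end Quotient

theorem commutator_le_of_commutatorElement_sig_mem (N : Subgroup (BraidGroup n)) [N.Normal]
    {j : ℕ} (h1 : 2 ≤ j) (h2 : j ≤ n - 1) (he : ⁅sig n j, (sig n (j - 1))⁻¹⁆ ∈ N) :
    commutator (BraidGroup n) ≤ N := by
  obtain ⟨p, rfl⟩ : ∃ p, j = p + 1 := ⟨j - 1, by omega⟩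
  rw [Nat.add_sub_cancel] at he
  set f := QuotientGroup.mk' N
  have hc : Commute (f (sig n p)) (f (sig n (p + 1))) := by
    rw [← Commute.inv_left_iff, ← map_inv, Commute.symm_iff,
      ← commutatorElement_eq_one_iff_commute, ← map_commutatorElement]
    exact (QuotientGroup.eq_one_iff _).mpr he
  have hbraid := congrArg f (sig_braid (n := n) (p := p) (by omega) (by omega))
  simp only [map_mul] at hbraid
  rw [← QuotientGroup.ker_mk' N]
  exact commutator_le_ker_of_map_sig_eq f _ fun _ hq1 hq2 =>
    map_sig_eq_map_sig_one f (by omega) (by omega) (eq_of_braid_of_commute hbraid hc) hq1 hq2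

theorem rho_self (i : ℕ) : rho n i i = sig n i := by
  simp [rho]

theorem rho_succ_self (i : ℕ) : rho n i (i + 1) = sig n i := by
  simp [rho]

theorem rho_succ {i m : ℕ} (h : i ≤ m) :
    rho n i (m + 1) = sig n m * rho n i m * (sig n m)⁻¹ := by
  rcases Nat.eq_or_lt_of_le h with rfl | hlt
  · rw [rho_succ_self, rho_self]; group
  · have hlen : m + 1 - 1 - i = (m - 1 - i) + 1 := by omega
    have hlast : i + 1 + 1 * (m - 1 - i) = m := by omega
    rw [rho, rho, hlen, List.range'_concat, List.reverse_append, hlast]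
    simp only [List.reverse_singleton, List.singleton_append, List.map_cons, List.prod_cons]
    group

theorem commute_sig_rho {m i j : ℕ} (hij : i < j) (hm : j + 1 ≤ m) :
    Commute (sig n m) (rho n i j) := by
  have hP : Commute (sig n m) ((List.range' (i + 1) (j - 1 - i)).reverse.map (sig n)).prod := by
    refine Commute.list_prod_right _ _ fun x hx => ?_
    obtain ⟨r, hr, rfl⟩ := List.mem_map.1 hx
    rw [List.mem_reverse, List.mem_range'] at hr
    obtain ⟨s, hs, rfl⟩ := hr
    exact (sig_commute (by omega)).symm
  exact (hP.mul_right (sig_commute (by omega)).symm).mul_right hP.inv_right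

-- The pair `(ρ_{i,m+1}, σ_{m+1})` is the conjugate of `(ρ_{i,m}, σ_m)` by `σ_m σ_{m+1}`.
theorem rho_braid {i m : ℕ} (h1 : 1 ≤ i) (him : i ≤ m) (hm : m ≤ n - 1) :
    rho n i m * sig n m * rho n i m = sig n m * rho n i m * sig n m := by
  induction m, him using Nat.le_induction with
  | base => rw [rho_self]
  | succ m him ih =>
    rcases Nat.eq_or_lt_of_le him with rfl | hlt
    · rw [rho_succ_self]; exact sig_braid h1 hm
    have hrho : rho n i (m + 1) = MulAut.conj (sig n m * sig n (m + 1)) (rho n i m) := by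
      rw [rho_succ him, MulAut.conj_apply]
      calc sig n m * rho n i m * (sig n m)⁻¹
          = sig n m * (sig n (m + 1) * rho n i m * (sig n (m + 1))⁻¹) * (sig n m)⁻¹ := by
            rw [(commute_sig_rho hlt le_rfl).mul_inv_cancel]
        _ = sig n m * sig n (m + 1) * rho n i m * (sig n m * sig n (m + 1))⁻¹ := by group
    have hsig : sig n (m + 1) = MulAut.conj (sig n m * sig n (m + 1)) (sig n m) :=
      (sig_conj (by omega) hm).symm
    generalize sig n m * sig n (m + 1) = g at hrho hsig
    have h := congrArg (MulAut.conj g) (ih (by omega))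
    simp only [map_mul] at h
    rwa [← hrho, ← hsig] at h

theorem exists_rho_eq_conj_sig_pred {i j : ℕ} (h1 : 1 ≤ i) (h2 : i < j) (h3 : j ≤ n) :
    ∃ y : BraidGroup n, Commute y (sig n j) ∧ rho n i j = y⁻¹ * sig n (j - 1) * y := by
  obtain ⟨m, rfl⟩ : ∃ m, j = m + 1 := ⟨j - 1, by omega⟩
  rw [Nat.add_sub_cancel]
  rcases Nat.eq_or_lt_of_le (Nat.le_of_lt_succ h2) with rfl | hlt
  · exact ⟨1, Commute.one_left _, by rw [rho_succ_self]; group⟩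
  · refine ⟨rho n i m, (commute_sig_rho hlt le_rfl).symm, ?_⟩
    rw [rho_succ hlt.le]
    exact mul_mul_inv_eq_of_braid (rho_braid h1 hlt.le (by omega))

theorem exists_rho_eq_conj_sig {i j : ℕ} (k : ℕ) (h : i < j) :
    ∃ R : BraidGroup n, Commute R (rho n i j) ∧ rho n j k = R * sig n j * R⁻¹ := by
  refine ⟨_, Commute.list_prod_left _ _ fun x hx => ?_, rfl⟩
  obtain ⟨r, hr, rfl⟩ := List.mem_map.1 hx
  rw [List.mem_reverse, List.mem_range'] at hr
  obtain ⟨s, hs, rfl⟩ := hr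
  exact commute_sig_rho h (by omega)

theorem isConj_commutatorElement_rho {i j k : ℕ} (h1 : 1 ≤ i) (h2 : i < j) (h3 : j < k)
    (h4 : k ≤ n) : IsConj ⁅sig n j, (sig n (j - 1))⁻¹⁆ ⁅rho n j k, (rho n i j)⁻¹⁆ := by
  obtain ⟨R, hR, hjk⟩ := exists_rho_eq_conj_sig (n := n) k h2
  obtain ⟨y, hy, hij⟩ := exists_rho_eq_conj_sig_pred (n := n) h1 h2 (by omega)
  refine isConj_iff.mpr ⟨R * y⁻¹, ?_⟩
  rw [conjugate_commutatorElement]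
  congr 1
  · calc R * y⁻¹ * sig n j * (R * y⁻¹)⁻¹ = R * (y⁻¹ * sig n j * y) * R⁻¹ := by group
      _ = rho n j k := by rw [hy.inv_mul_cancel, hjk]
  · calc R * y⁻¹ * (sig n (j - 1))⁻¹ * (R * y⁻¹)⁻¹
          = R * (y⁻¹ * sig n (j - 1) * y)⁻¹ * R⁻¹ := by group
      _ = (rho n i j)⁻¹ := by rw [← hij, hR.inv_right.mul_inv_cancel]

-- For `n = 5, j = 3` the half twist of the outer strands `1, 5` serves.
theorem exists_isConj_sig_one_commute_sig (hn : 5 ≤ n) {j : ℕ} (h1 : 2 ≤ j) (h2 : j ≤ n - 1) :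
    ∃ t : BraidGroup n,
      IsConj (sig n 1) t ∧ Commute t (sig n (j - 1)) ∧ Commute t (sig n j) := by
  by_cases hj : 4 ≤ j
  · exact ⟨sig n 1, IsConj.refl _, sig_commute (by omega), sig_commute (by omega)⟩
  by_cases hjn : j + 2 ≤ n - 1
  · exact ⟨sig n (j + 2), isConj_sig_one (by omega) (by omega),
      (sig_commute (by omega)).symm, (sig_commute (by omega)).symm⟩
  obtain rfl : n = 5 := by omega
  obtain rfl : j = 3 := by omega
  obtain ⟨W, hW⟩ : ∃ W : BraidGroup 5, W = sig 5 4 * sig 5 3 * sig 5 2 := ⟨_, rfl⟩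
  have hW3 : MulAut.conj W (sig 5 3) = sig 5 2 :=
    calc W * sig 5 3 * W⁻¹
        = sig 5 4 * ((sig 5 3 * sig 5 2) * sig 5 3 * (sig 5 3 * sig 5 2)⁻¹) * (sig 5 4)⁻¹ := by
          rw [hW]; group
      _ = sig 5 2 := by
          rw [conj_eq_of_braid (sig_braid (by omega) (by omega)).symm,
            (sig_commute (by omega)).symm.mul_inv_cancel]
  have hW4 : MulAut.conj W (sig 5 4) = sig 5 3 :=
    calc W * sig 5 4 * W⁻¹
        = (sig 5 4 * sig 5 3) * (sig 5 2 * sig 5 4 * (sig 5 2)⁻¹) * (sig 5 4 * sig 5 3)⁻¹ := by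
          rw [hW]; group
      _ = sig 5 3 := by
          rw [(sig_commute le_rfl).mul_inv_cancel,
            conj_eq_of_braid (sig_braid (by omega) (by omega)).symm]
  refine ⟨MulAut.conj W (sig 5 1), isConj_iff.mpr ⟨W, rfl⟩, ?_, ?_⟩
  · show Commute _ (sig 5 2)
    rw [← hW3]
    exact (sig_commute le_rfl).map _
  · rw [← hW4]
    exact (sig_commute (by omega)).map _

theorem exists_isConj_sig_one_commute_commutatorElement_rho (hn : 5 ≤ n) {i j k : ℕ}
    (h1 : 1 ≤ i) (h2 : i < j) (h3 : j < k) (h4 : k ≤ n) :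
    ∃ t : BraidGroup n, IsConj (sig n 1) t ∧ Commute t ⁅rho n j k, (rho n i j)⁻¹⁆ := by
  obtain ⟨g, hg⟩ := isConj_iff.mp (isConj_commutatorElement_rho h1 h2 h3 h4)
  obtain ⟨t, ht, htj', htj⟩ := exists_isConj_sig_one_commute_sig hn (j := j) (by omega) (by omega)
  refine ⟨MulAut.conj g t, ht.trans (isConj_iff.mpr ⟨g, rfl⟩), ?_⟩
  rw [← hg, ← MulAut.conj_apply]
  refine Commute.map ?_ _
  rw [commutatorElement_def, inv_inv]
  exact ((htj.mul_right htj'.inv_right).mul_right htj.inv_right).mul_right htj'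

end BraidGroup

open BraidGroup

/-- For n ≥ 5, if a quotient of B'_n identifies α_{ijk} = ρ_{jk}ρ_{ij}⁻¹ with
β_{ijk} = ρ_{ij}⁻¹ρ_{jk} for some triple i < j < k, then the quotient is trivial. -/
theorem quotient_trivial_of_alpha_eq_beta (n : ℕ) (hn : 5 ≤ n) {G : Type*} [Group G]
    (q : ↥(commutator (BraidGroup n)) →* G) (hq : Function.Surjective q)
    (i j k : ℕ) (h1 : 1 ≤ i) (h2 : i < j) (h3 : j < k) (h4 : k ≤ n)
    (a b : ↥(commutator (BraidGroup n)))
    (ha : (a : BraidGroup n) = rho n j k * (rho n i j)⁻¹)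
    (hb : (b : BraidGroup n) = (rho n i j)⁻¹ * rho n j k)
    (hab : q a = q b) :
    ∀ g : G, g = 1 := by
  set M := q.ker.map (commutator (BraidGroup n)).subtype
  have hcM : ⁅rho n j k, (rho n i j)⁻¹⁆ ∈ M := by
    refine ⟨a * b⁻¹, ?_, ?_⟩
    · rw [SetLike.mem_coe, MonoidHom.mem_ker, map_mul, map_inv, hab, mul_inv_cancel]
    · simp only [Subgroup.coe_subtype, Subgroup.coe_mul, InvMemClass.coe_inv, ha, hb,
        commutatorElement_def]
      group
  have hHM : commutator (BraidGroup n) ≤ Subgroup.normalizer (M : Set (BraidGroup n)) :=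
    fun x hx => Subgroup.le_normalizer_map _ ⟨⟨x, hx⟩, by simp [Subgroup.normalizer_eq_top], rfl⟩
  obtain ⟨t, ht, htc⟩ := exists_isConj_sig_one_commute_commutatorElement_rho hn h1 h2 h3 h4
  have hclosure :=
    Subgroup.normalClosure_le_of_commute hHM hcM htc (exists_mul_zpow_mem_commutator ht)
  have hcomm := commutator_le_of_commutatorElement_sig_mem
    (Subgroup.normalClosure {⁅rho n j k, (rho n i j)⁻¹⁆}) (by omega) (by omega)
    (Subgroup.conjugatesOfSet_subset_normalClosure (Group.mem_conjugatesOfSet_iff.mpr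
      ⟨_, rfl, (isConj_commutatorElement_rho h1 h2 h3 h4).symm⟩))
  intro g
  obtain ⟨x, rfl⟩ := hq g
  exact (Subgroup.mem_map_iff_mem (Subgroup.subtype_injective _)).mp (hclosure (hcomm x.2))
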